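/- arXiv:2002.06694 — 2 statements merged into one kernel-verified Lean document; each statement's English description precedes it below -/
import Mathlib

section
/- (Family of bounds for the ball model, Part 2(a): almost-empty Voronoi sets.) Let β = (β_1, …, β_k) ∈ (ℝ^d)^k be a local minimum of G and let λ > 0. Fix i ∈ [k] and suppose that ρ_s(∂_{j,ℓ}) ≤ λ for every s ∈ T_i and every pair (j, ℓ) with j ≠ ℓ, and that A_i = ∅. Then P(V_i(β)) ≤ kλr. -/
open MeasureTheory Metric Set

noncomputable section

/-- Density of the uniform distribution on the closed ball of center `c` and radius `r`
in `ℝ^d`. -/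
def unifBallDensity (d : ℕ) (c : EuclideanSpace ℝ (Fin d)) (r : ℝ)
    (x : EuclideanSpace ℝ (Fin d)) : ℝ :=
  (Metric.closedBall c r).indicator
    (fun _ => ((volume (Metric.closedBall c r)).toReal)⁻¹) x

/-- Mixture density of the Stochastic Ball Model with true centers `βstar` and radius `r`. -/
def ballMixDensity (d k : ℕ) (βstar : Fin k → EuclideanSpace ℝ (Fin d)) (r : ℝ)
    (x : EuclideanSpace ℝ (Fin d)) : ℝ :=
  (1 / (k : ℝ)) * ∑ s : Fin k, unifBallDensity d (βstar s) r x

/-- Population k-means objective with data density `f`. -/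
def kmeansObj (d k : ℕ) (f : EuclideanSpace ℝ (Fin d) → ℝ)
    (β : Fin k → EuclideanSpace ℝ (Fin d)) : ℝ :=
  ∫ x, (⨅ j : Fin k, ‖x - β j‖ ^ 2) * f x

/-- Voronoi set of the fitted center `β i`. -/
def voronoi (d k : ℕ) (β : Fin k → EuclideanSpace ℝ (Fin d)) (i : Fin k) :
    Set (EuclideanSpace ℝ (Fin d)) :=
  {x | ∀ j : Fin k, ‖x - β i‖ ≤ ‖x - β j‖}

/-- Voronoi boundary between the fitted centers `β i` and `β j`. -/
def vorBoundary (d k : ℕ) (β : Fin k → EuclideanSpace ℝ (Fin d)) (i j : Fin k) :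
    Set (EuclideanSpace ℝ (Fin d)) :=
  {x ∈ voronoi d k β i ∪ voronoi d k β j | ‖x - β i‖ = ‖x - β j‖}

/-- `ρ_s(∂_{i,j})`: relative volume ((d−1)-dimensional Hausdorff measure, normalized by the
volume of a radius-`r` ball) of the part of the Voronoi boundary `∂_{i,j}(β)` inside the
true cluster `B_s`. -/
def rhoBoundary (d k : ℕ) (βstar : Fin k → EuclideanSpace ℝ (Fin d)) (r : ℝ)
    (β : Fin k → EuclideanSpace ℝ (Fin d)) (s i j : Fin k) : ℝ :=
  (MeasureTheory.Measure.hausdorffMeasure ((d : ℝ) - 1)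
      (vorBoundary d k β i j ∩ Metric.closedBall (βstar s) r)).toReal /
    ((volume (Metric.ball (0 : EuclideanSpace ℝ (Fin d)) 1)).toReal * r ^ d)

/-- `T_i`: the indices of true clusters meeting the Voronoi set `V_i(β)`. -/
def Tset (d k : ℕ) (βstar : Fin k → EuclideanSpace ℝ (Fin d)) (r : ℝ)
    (β : Fin k → EuclideanSpace ℝ (Fin d)) (i : Fin k) : Set (Fin k) :=
  {s | (voronoi d k β i ∩ Metric.closedBall (βstar s) r).Nonempty}

/-- `A_i`: the indices of true centers lying in the interior of the Voronoi set `V_i(β)`. -/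
def Aset (d k : ℕ) (βstar : Fin k → EuclideanSpace ℝ (Fin d)) (r : ℝ)
    (β : Fin k → EuclideanSpace ℝ (Fin d)) (i : Fin k) : Set (Fin k) :=
  {s | βstar s ∈ interior (voronoi d k β i)}

/-- Maximum pairwise distance among the true centers. -/
def Deltamax (d k : ℕ) (βstar : Fin k → EuclideanSpace ℝ (Fin d)) : ℝ :=
  sSup {y : ℝ | ∃ s s' : Fin k, s ≠ s' ∧ y = dist (βstar s) (βstar s')}

/-- Minimum pairwise distance among the true centers. -/
def Deltamin (d k : ℕ) (βstar : Fin k → EuclideanSpace ℝ (Fin d)) : ℝ :=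
  sInf {y : ℝ | ∃ s s' : Fin k, s ≠ s' ∧ y = dist (βstar s) (βstar s')}

/-!
Split `P(V_i)` over the true clusters `B_s` meeting `V_i`. Since `β*_s` is not interior to
`V_i`, some face of the Voronoi cell puts `V_i` in a half-space `⟪u, ·⟫ ≥ m` whose complement
contains `β*_s`. Sliding a point of `V_i ∩ B_s` in direction `-u` until it leaves `V_i` never
leaves `B_s`, so `V_i ∩ B_s` lies in a slab of width `r` over the orthogonal projection of
`∂V_i ∩ B_s`. Projections are `1`-Lipschitz, hence
`vol(V_i ∩ B_s) ≤ r · ∑ⱼ H^{d-1}(∂_{i,j} ∩ B_s) ≤ k λ r · vol(B_s)`, and averaging over `s`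
gives the bound.
-/

open scoped RealInnerProductSpace

section Halfspace

variable {F : Type*} [NormedAddCommGroup F] [InnerProductSpace ℝ F]

theorem exists_unit_normal_of_ne {a b : F} (hab : a ≠ b) :
    ∃ u : F, ‖u‖ = 1 ∧ ∃ m : ℝ, ∀ x : F,
      (‖x - a‖ ≤ ‖x - b‖ ↔ m ≤ ⟪u, x⟫) ∧ (‖x - b‖ ≤ ‖x - a‖ ↔ ⟪u, x⟫ ≤ m) := by
  have hN : 0 < ‖a - b‖ := norm_pos_iff.2 (sub_ne_zero.2 hab)
  refine ⟨‖a - b‖⁻¹ • (a - b), by rw [norm_smul, norm_inv, norm_norm, inv_mul_cancel₀ hN.ne'],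
    (‖a‖ ^ 2 - ‖b‖ ^ 2) / (2 * ‖a - b‖), fun x => ?_⟩
  have key : ‖x - b‖ ^ 2 - ‖x - a‖ ^ 2 =
      2 * ‖a - b‖ * (⟪‖a - b‖⁻¹ • (a - b), x⟫ - (‖a‖ ^ 2 - ‖b‖ ^ 2) / (2 * ‖a - b‖)) := by
    rw [real_inner_smul_left, inner_sub_left, norm_sub_sq_real, norm_sub_sq_real,
      real_inner_comm a x, real_inner_comm b x]
    field_simp
    ring
  rw [← sq_le_sq₀ (norm_nonneg _) (norm_nonneg _), ← sq_le_sq₀ (norm_nonneg _) (norm_nonneg _)]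
  constructor <;> constructor <;> intro h <;> nlinarith

theorem inner_sub_smul_of_norm_eq_one {u : F} (hu : ‖u‖ = 1) (x : F) (t : ℝ) :
    ⟪u, x - t • u⟫ = ⟪u, x⟫ - t := by
  rw [inner_sub_right, real_inner_smul_right, real_inner_self_eq_norm_sq, hu]
  ring

theorem norm_sub_smul_le_of_le_inner {u v : F} (hu : ‖u‖ = 1) {t : ℝ} (ht₀ : 0 ≤ t)
    (ht : t ≤ ⟪u, v⟫) : ‖v - t • u‖ ≤ ‖v‖ := by
  rw [← sq_le_sq₀ (norm_nonneg _) (norm_nonneg _), norm_sub_sq_real, real_inner_smul_right,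
    norm_smul, hu, real_inner_comm, Real.norm_eq_abs, mul_one, sq_abs]
  nlinarith

end Halfspace

theorem exists_sub_smul_mem_frontier {F : Type*} [AddCommGroup F] [Module ℝ F]
    [TopologicalSpace F] [IsTopologicalAddGroup F] [ContinuousSMul ℝ F] {S : Set F}
    (hS : IsClosed S) {x : F} (hx : x ∈ S) (u : F)
    (hbdd : BddAbove {t : ℝ | 0 ≤ t ∧ x - t • u ∈ S}) :
    ∃ t : ℝ, 0 ≤ t ∧ x - t • u ∈ frontier S := by
  set I := {t : ℝ | 0 ≤ t ∧ x - t • u ∈ S}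
  have hI : IsClosed I := isClosed_Ici.inter (hS.preimage (by fun_prop))
  have hT : sSup I ∈ I := hI.csSup_mem ⟨0, le_rfl, by simpa using hx⟩ hbdd
  refine ⟨sSup I, hT.1, ?_⟩
  rw [frontier_eq_closure_inter_closure]
  refine ⟨subset_closure hT.2, ?_⟩
  have hray : Filter.Tendsto (fun t : ℝ => x - t • u) (nhdsWithin (sSup I) (Set.Ioi (sSup I)))
      (nhds (x - sSup I • u)) :=
    ((by fun_prop : Continuous fun t : ℝ => x - t • u).tendsto _).mono_left nhdsWithin_le_nhds
  exact mem_closure_of_tendsto hray <| eventually_nhdsWithin_of_forall fun t ht hmem =>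
    (not_le.2 ht) (le_csSup hbdd ⟨hT.1.trans ht.le, hmem⟩)

theorem hausdorffMeasure_pi_fin_eq_volume (n : ℕ) :
    (μH[n] : Measure (Fin n → ℝ)) = volume := by
  simpa using hausdorffMeasure_pi_real (ι := Fin n)

section Slab

variable {E : Type*} [NormedAddCommGroup E] [InnerProductSpace ℝ E] {n : ℕ}

theorem exists_orthonormalBasis_apply_zero_eq [FiniteDimensional ℝ E]
    (hE : Module.finrank ℝ E = n + 1) {u : E} (hu : ‖u‖ = 1) :
    ∃ b : OrthonormalBasis (Fin (n + 1)) ℝ E, b 0 = u := by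
  have horth : Orthonormal ℝ (({0} : Set (Fin (n + 1))).domRestrict fun _ => u) :=
    ⟨fun _ => hu, fun i j hij => absurd (Subsingleton.elim i j) hij⟩
  obtain ⟨b, hb⟩ :=
    horth.exists_orthonormalBasis_extension_of_card_eq (by rw [hE, Fintype.card_fin])
  exact ⟨b, hb 0 rfl⟩

def OrthonormalBasis.tailCoords (b : OrthonormalBasis (Fin (n + 1)) ℝ E) (x : E) : Fin n → ℝ :=
  Fin.tail (b.repr x).ofLp

variable (b : OrthonormalBasis (Fin (n + 1)) ℝ E)

theorem OrthonormalBasis.tailCoords_sub_smul (x : E) (t : ℝ) :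
    b.tailCoords (x - t • b 0) = b.tailCoords x := by
  funext l
  simp [OrthonormalBasis.tailCoords, Fin.tail, b.repr_self, Fin.succ_ne_zero]

theorem OrthonormalBasis.lipschitzWith_tailCoords : LipschitzWith 1 b.tailCoords := by
  refine LipschitzWith.of_dist_le_mul fun x y => ?_
  rw [NNReal.coe_one, one_mul, dist_pi_le_iff dist_nonneg, dist_eq_norm]
  intro l
  rw [Real.dist_eq, OrthonormalBasis.tailCoords, OrthonormalBasis.tailCoords, Fin.tail, Fin.tail,
    ← PiLp.sub_apply, ← map_sub, ← Real.norm_eq_abs, ← b.repr.norm_map (x - y)]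
  exact PiLp.norm_apply_le _ _

variable [MeasurableSpace E] [BorelSpace E]

theorem OrthonormalBasis.volume_le_ofReal_mul_volume_image_tailCoords [FiniteDimensional ℝ E]
    {S : Set E} {m r : ℝ} (hS : ∀ x ∈ S, ⟪b 0, x⟫ ∈ Icc m (m + r)) :
    volume S ≤ ENNReal.ofReal r * volume (b.tailCoords '' S) := by
  let Ψ : E → ℝ × (Fin n → ℝ) :=
    MeasurableEquiv.piFinSuccAbove (fun _ => ℝ) 0 ∘ (MeasurableEquiv.toLp 2 _).symm ∘ b.repr
  have hΨ : MeasurePreserving Ψ volume volume :=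
    (volume_preserving_piFinSuccAbove _ 0).comp
      ((EuclideanSpace.volume_preserving_symm_measurableEquiv_toLp _).comp
        b.measurePreserving_repr)
  have hΨ_apply (x : E) : Ψ x = (⟪b 0, x⟫, b.tailCoords x) :=
    Prod.ext (b.repr_apply_apply x 0) rfl
  have hsub : S ⊆ Ψ ⁻¹' (Icc m (m + r) ×ˢ toMeasurable volume (b.tailCoords '' S)) :=
    fun x hx => by
      rw [mem_preimage, hΨ_apply]
      exact ⟨hS x hx, subset_toMeasurable _ _ (mem_image_of_mem _ hx)⟩
  calc volume S
      ≤ volume (Ψ ⁻¹' (Icc m (m + r) ×ˢ toMeasurable volume (b.tailCoords '' S))) :=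
        measure_mono hsub
    _ = volume (Icc m (m + r)) * volume (toMeasurable volume (b.tailCoords '' S)) := by
        rw [hΨ.measure_preimage
          (measurableSet_Icc.prod (measurableSet_toMeasurable _ _)).nullMeasurableSet,
          Measure.volume_eq_prod, Measure.prod_prod]
    _ = ENNReal.ofReal r * volume (b.tailCoords '' S) := by
        rw [Real.volume_Icc, add_sub_cancel_left, measure_toMeasurable]

theorem OrthonormalBasis.volume_inter_closedBall_le_ofReal_mul_hausdorffMeasure_frontier
    [FiniteDimensional ℝ E] {S : Set E} (hS : IsClosed S) {m : ℝ} (hSm : ∀ x ∈ S, m ≤ ⟪b 0, x⟫)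
    {c : E} (hc : ⟪b 0, c⟫ ≤ m) (r : ℝ) :
    volume (S ∩ closedBall c r) ≤ ENNReal.ofReal r * μH[n] (frontier S ∩ closedBall c r) := by
  have hu : ‖b 0‖ = 1 := b.orthonormal.1 0
  have hslab (x) (hx : x ∈ S ∩ closedBall c r) : ⟪b 0, x⟫ ∈ Icc m (m + r) := by
    have hxc := (real_inner_le_norm (b 0) (x - c)).trans_eq (by rw [hu, one_mul])
    rw [inner_sub_right] at hxc
    exact ⟨hSm x hx.1, by linarith [mem_closedBall_iff_norm.1 hx.2]⟩
  -- Sliding `x` against `b 0` until it leaves `S` stays in the ball, because `c` lies on the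
  -- far side of the supporting hyperplane `⟪b 0, ·⟫ = m`.
  have hshadow : b.tailCoords '' (S ∩ closedBall c r) ⊆
      b.tailCoords '' (frontier S ∩ closedBall c r) := by
    rintro _ ⟨x, ⟨hxS, hxc⟩, rfl⟩
    have hbdd : BddAbove {t : ℝ | 0 ≤ t ∧ x - t • b 0 ∈ S} := ⟨⟪b 0, x⟫ - m, fun t ht => by
      linarith [hSm _ ht.2, inner_sub_smul_of_norm_eq_one hu x t]⟩
    obtain ⟨t, ht₀, hfr⟩ := exists_sub_smul_mem_frontier hS hxS (b 0) hbdd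
    have ht : t ≤ ⟪b 0, x - c⟫ := by
      linarith [hSm _ (hS.frontier_subset hfr), inner_sub_smul_of_norm_eq_one hu x t,
        inner_sub_right (𝕜 := ℝ) (b 0) x c]
    refine ⟨x - t • b 0, ⟨hfr, ?_⟩, b.tailCoords_sub_smul x t⟩
    rw [mem_closedBall_iff_norm, sub_right_comm]
    exact (norm_sub_smul_le_of_le_inner hu ht₀ ht).trans (mem_closedBall_iff_norm.1 hxc)
  calc volume (S ∩ closedBall c r)
      ≤ ENNReal.ofReal r * volume (b.tailCoords '' (S ∩ closedBall c r)) :=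
        b.volume_le_ofReal_mul_volume_image_tailCoords hslab
    _ ≤ ENNReal.ofReal r * μH[n] (b.tailCoords '' (frontier S ∩ closedBall c r)) := by
        rw [← hausdorffMeasure_pi_fin_eq_volume]
        gcongr
    _ ≤ ENNReal.ofReal r * μH[n] (frontier S ∩ closedBall c r) := by
        gcongr
        simpa using b.lipschitzWith_tailCoords.hausdorffMeasure_image_le (Nat.cast_nonneg n) _

theorem OrthonormalBasis.hausdorffMeasure_inner_eq_inter_closedBall_ne_top (m : ℝ) (c : E)
    (r : ℝ) : μH[n] ({x | ⟪b 0, x⟫ = m} ∩ closedBall c r) ≠ ⊤ := by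
  -- The slice is the image of an `n`-dimensional ball under the Lipschitz chart `w ↦ (m, w)`.
  let cons : (Fin n → ℝ) → Fin (n + 1) → ℝ := @Fin.cons n (fun _ => ℝ) m
  let φ : (Fin n → ℝ) → E := fun w => b.repr.symm (WithLp.toLp 2 (cons w))
  have hcons : LipschitzWith 1 cons :=
    LipschitzWith.of_dist_le_mul fun w w' => by
      rw [NNReal.coe_one, one_mul, dist_pi_le_iff dist_nonneg]
      exact Fin.cases (by simp [cons]) fun l => by simpa [cons] using dist_le_pi_dist w w' l
  obtain ⟨K, hφ⟩ : ∃ K, LipschitzWith K φ :=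
    ⟨_, b.repr.symm.lipschitz.comp ((PiLp.lipschitzWith_toLp 2 _).comp hcons)⟩
  have hsub : {x | ⟪b 0, x⟫ = m} ∩ closedBall c r ⊆ φ '' closedBall (b.tailCoords c) r := by
    rintro x ⟨hx, hxc⟩
    refine ⟨b.tailCoords x, by simpa using b.lipschitzWith_tailCoords.dist_le_mul_of_le hxc, ?_⟩
    have hx0 : (b.repr x).ofLp 0 = m := (b.repr_apply_apply x 0).trans hx
    simp only [φ, cons, OrthonormalBasis.tailCoords, ← hx0, Fin.cons_self_tail, WithLp.toLp_ofLp,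
      LinearIsometryEquiv.symm_apply_apply]
  refine ne_top_of_le_ne_top ?_ (measure_mono hsub)
  refine ne_top_of_le_ne_top ?_ (hφ.hausdorffMeasure_image_le (Nat.cast_nonneg n) _)
  rw [hausdorffMeasure_pi_fin_eq_volume]
  exact ENNReal.mul_ne_top (by simp) measure_closedBall_lt_top.ne

end Slab

section Voronoi

variable {d k : ℕ}

theorem isClosed_voronoi (β : Fin k → EuclideanSpace ℝ (Fin d)) (i : Fin k) :
    IsClosed (voronoi d k β i) := by
  simp only [voronoi, ofPred_forall]
  exact isClosed_iInter fun j => isClosed_le (by fun_prop) (by fun_prop)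

theorem exists_le_of_notMem_interior_voronoi {β : Fin k → EuclideanSpace ℝ (Fin d)} {i : Fin k}
    {x : EuclideanSpace ℝ (Fin d)} (hx : x ∉ interior (voronoi d k β i)) :
    ∃ j, β j ≠ β i ∧ ‖x - β j‖ ≤ ‖x - β i‖ := by
  by_contra! h
  let O := ⋂ j ∈ {j | β j ≠ β i}, {y | ‖y - β i‖ < ‖y - β j‖}
  have hO : IsOpen O :=
    (toFinite _).isOpen_biInter fun j _ => isOpen_lt (by fun_prop) (by fun_prop)
  have hOV : O ⊆ voronoi d k β i := fun y hy j => by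
    by_cases hj : β j = β i
    · rw [hj]
    · exact (mem_iInter₂.1 hy j hj).le
  exact hx (interior_maximal hOV hO (mem_iInter₂.2 h))

open scoped Classical in
theorem frontier_voronoi_subset {β : Fin k → EuclideanSpace ℝ (Fin d)} {i : Fin k} :
    frontier (voronoi d k β i) ⊆
      ⋃ j ∈ Finset.univ.filter (fun j => β j ≠ β i), vorBoundary d k β i j := by
  rw [(isClosed_voronoi β i).frontier_eq]
  rintro x ⟨hxV, hx⟩
  obtain ⟨j, hj, hle⟩ := exists_le_of_notMem_interior_voronoi hx
  exact mem_biUnion (Finset.mem_filter.2 ⟨Finset.mem_univ j, hj⟩)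
    ⟨Or.inl hxV, le_antisymm (hxV j) hle⟩

end Voronoi

section VoronoiCap

variable {n k : ℕ} {β : Fin k → EuclideanSpace ℝ (Fin (n + 1))} {i : Fin k}
  {c : EuclideanSpace ℝ (Fin (n + 1))}

open scoped Classical in
theorem volume_voronoi_inter_closedBall_le (hc : c ∉ interior (voronoi (n + 1) k β i)) (r : ℝ) :
    volume (voronoi (n + 1) k β i ∩ closedBall c r) ≤ ENNReal.ofReal r *
      ∑ j ∈ Finset.univ.filter (fun j => β j ≠ β i),
        μH[n] (vorBoundary (n + 1) k β i j ∩ closedBall c r) := by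
  obtain ⟨j₀, hj₀, hcj₀⟩ := exists_le_of_notMem_interior_voronoi hc
  obtain ⟨u, hu, m, hm⟩ := exists_unit_normal_of_ne (Ne.symm hj₀)
  obtain ⟨b, rfl⟩ := exists_orthonormalBasis_apply_zero_eq finrank_euclideanSpace_fin hu
  refine (b.volume_inter_closedBall_le_ofReal_mul_hausdorffMeasure_frontier
    (isClosed_voronoi β i) (fun x hx => (hm x).1.1 (hx j₀)) ((hm c).2.1 hcj₀) r).trans ?_
  gcongr
  refine (measure_mono (inter_subset_inter_left _ frontier_voronoi_subset)).trans ?_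
  rw [iUnion₂_inter]
  exact measure_biUnion_finset_le _ _

theorem hausdorffMeasure_vorBoundary_inter_closedBall_ne_top {j : Fin k} (hj : β j ≠ β i)
    (c : EuclideanSpace ℝ (Fin (n + 1))) (r : ℝ) :
    μH[n] (vorBoundary (n + 1) k β i j ∩ closedBall c r) ≠ ⊤ := by
  obtain ⟨u, hu, m, hm⟩ := exists_unit_normal_of_ne (Ne.symm hj)
  obtain ⟨b, rfl⟩ := exists_orthonormalBasis_apply_zero_eq finrank_euclideanSpace_fin hu
  refine ne_top_of_le_ne_top (b.hausdorffMeasure_inner_eq_inter_closedBall_ne_top m c r)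
    (measure_mono (inter_subset_inter_left _ fun x hx => ?_))
  exact le_antisymm ((hm x).2.1 hx.2.ge) ((hm x).1.1 hx.2.le)

open scoped Classical in
theorem measureReal_voronoi_inter_closedBall_le
    (hc : c ∉ interior (voronoi (n + 1) k β i)) {r a : ℝ} (hr : 0 ≤ r) (ha : 0 ≤ a)
    (hbdry : ∀ j, β j ≠ β i → (μH[n] (vorBoundary (n + 1) k β i j ∩ closedBall c r)).toReal ≤ a) :
    volume.real (voronoi (n + 1) k β i ∩ closedBall c r) ≤ k * r * a := by
  have hpiece : ∀ j ∈ Finset.univ.filter (fun j => β j ≠ β i),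
      μH[n] (vorBoundary (n + 1) k β i j ∩ closedBall c r) ≤ ENNReal.ofReal a := fun j hj =>
    have hj := (Finset.mem_filter.1 hj).2
    (ENNReal.le_ofReal_iff_toReal_le
      (hausdorffMeasure_vorBoundary_inter_closedBall_ne_top hj c r) ha).2 (hbdry j hj)
  refine ENNReal.toReal_le_of_le_ofReal (by positivity) ?_
  calc volume (voronoi (n + 1) k β i ∩ closedBall c r)
      ≤ ENNReal.ofReal r * ∑ j ∈ Finset.univ.filter (fun j => β j ≠ β i),
          μH[n] (vorBoundary (n + 1) k β i j ∩ closedBall c r) :=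
        volume_voronoi_inter_closedBall_le hc r
    _ ≤ ENNReal.ofReal r * (k * ENNReal.ofReal a) := by
        gcongr
        refine (Finset.sum_le_card_nsmul _ _ _ hpiece).trans ?_
        rw [nsmul_eq_mul]
        gcongr
        exact_mod_cast (Finset.card_filter_le _ _).trans_eq (Finset.card_fin k)
    _ = ENNReal.ofReal (k * r * a) := by
        rw [ENNReal.ofReal_mul (by positivity), ENNReal.ofReal_mul (by positivity),
          ENNReal.ofReal_natCast]
        ring

end VoronoiCap

section BallModel

variable {d k : ℕ}

theorem setIntegral_unifBallDensity (V : Set (EuclideanSpace ℝ (Fin d)))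
    (c : EuclideanSpace ℝ (Fin d)) (r : ℝ) :
    ∫ x in V, unifBallDensity d c r x =
      volume.real (V ∩ closedBall c r) / volume.real (closedBall c r) := by
  unfold unifBallDensity
  rw [setIntegral_indicator measurableSet_closedBall, setIntegral_const,
    smul_eq_mul, div_eq_mul_inv, measureReal_def, measureReal_def]

theorem setIntegral_ballMixDensity_le (βstar : Fin k → EuclideanSpace ℝ (Fin d)) (r : ℝ)
    (V : Set (EuclideanSpace ℝ (Fin d))) {C : ℝ} (hC : 0 ≤ C)
    (h : ∀ s, ∫ x in V, unifBallDensity d (βstar s) r x ≤ C) :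
    ∫ x in V, ballMixDensity d k βstar r x ≤ C := by
  have hint (s : Fin k) : Integrable (unifBallDensity d (βstar s) r) (volume.restrict V) :=
    ((integrable_indicator_iff measurableSet_closedBall).2
      (integrableOn_const measure_closedBall_lt_top.ne)).restrict
  calc ∫ x in V, ballMixDensity d k βstar r x
      = 1 / k * ∑ s, ∫ x in V, unifBallDensity d (βstar s) r x := by
        unfold ballMixDensity
        rw [integral_const_mul, integral_finsetSum _ fun s _ => hint s]
    _ ≤ 1 / k * ∑ _s : Fin k, C := by gcongr with s; exact h s
    _ ≤ C := by
        rw [Finset.sum_const, Finset.card_fin, nsmul_eq_mul, ← mul_assoc]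
        refine mul_le_of_le_one_left hC ?_
        rcases k.eq_zero_or_pos with rfl | hk
        · simp
        · rw [one_div_mul_cancel (by positivity)]

theorem rhoBoundary_eq {n : ℕ} (βstar : Fin k → EuclideanSpace ℝ (Fin (n + 1))) {r : ℝ}
    (hr : 0 ≤ r) (β : Fin k → EuclideanSpace ℝ (Fin (n + 1))) (s i j : Fin k) :
    rhoBoundary (n + 1) k βstar r β s i j =
      (μH[n] (vorBoundary (n + 1) k β i j ∩ closedBall (βstar s) r)).toReal /
        volume.real (closedBall (βstar s) r) := by
  rw [rhoBoundary, measureReal_def, Measure.addHaar_closedBall _ _ hr, finrank_euclideanSpace_fin,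
    ENNReal.toReal_mul, ENNReal.toReal_ofReal (by positivity), mul_comm]
  push_cast
  ring_nf

end BallModel

theorem ball_family_bounds_part2a_general (d k : ℕ) (hd : 1 ≤ d)
    (βstar : Fin k → EuclideanSpace ℝ (Fin d))
    (r : ℝ) (hr : 0 < r)
    (β : Fin k → EuclideanSpace ℝ (Fin d))
    (lam : ℝ) (hlam : 0 < lam) (i : Fin k)
    (hrho : ∀ s ∈ Tset d k βstar r β i, ∀ j l : Fin k, j ≠ l →
      rhoBoundary d k βstar r β s j l ≤ lam)
    (hA : Aset d k βstar r β i = ∅) :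
    (∫ x in voronoi d k β i, ballMixDensity d k βstar r x) ≤ k * lam * r := by
  obtain ⟨n, rfl⟩ : ∃ n, d = n + 1 := ⟨d - 1, by omega⟩
  refine setIntegral_ballMixDensity_le βstar r _ (by positivity) fun s => ?_
  rw [setIntegral_unifBallDensity]
  refine div_le_of_le_mul₀ measureReal_nonneg (by positivity) ?_
  rcases (voronoi (n + 1) k β i ∩ closedBall (βstar s) r).eq_empty_or_nonempty with hs | hs
  · rw [hs, measureReal_empty]
    positivity
  have hball : 0 < volume.real (closedBall (βstar s) r) :=
    ENNReal.toReal_pos (measure_closedBall_pos _ _ hr).ne' measure_closedBall_lt_top.ne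
  have hc : βstar s ∉ interior (voronoi (n + 1) k β i) := eq_empty_iff_forall_notMem.1 hA s
  calc volume.real (voronoi (n + 1) k β i ∩ closedBall (βstar s) r)
      ≤ k * r * (lam * volume.real (closedBall (βstar s) r)) :=
        measureReal_voronoi_inter_closedBall_le hc hr.le (by positivity) fun j hj => by
          have hρ := hrho s hs i j fun h => hj (congrArg β h).symm
          rwa [rhoBoundary_eq βstar hr.le, div_le_iff₀ hball] at hρ
    _ = k * lam * r * volume.real (closedBall (βstar s) r) := by ring

/-- Family of bounds for the ball model, Part 2(a): if every true cluster meeting `V_i(β)`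
only encloses Voronoi boundaries of relative volume at most `λ`, and no true center lies in
the interior of `V_i(β)`, then the Voronoi set `V_i(β)` is almost empty: `P(V_i(β)) ≤ kλr`. -/
theorem ball_family_bounds_part2a (d k : ℕ) (hd : 1 ≤ d) (hk : 2 ≤ k)
    (βstar : Fin k → EuclideanSpace ℝ (Fin d)) (hinj : Function.Injective βstar)
    (r : ℝ) (hr : 0 < r)
    (hdisj : Pairwise fun s s' : Fin k =>
      Disjoint (Metric.closedBall (βstar s) r) (Metric.closedBall (βstar s') r))
    (β : Fin k → EuclideanSpace ℝ (Fin d))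
    (hmin : IsLocalMin (kmeansObj d k (ballMixDensity d k βstar r)) β)
    (lam : ℝ) (hlam : 0 < lam) (i : Fin k)
    (hrho : ∀ s ∈ Tset d k βstar r β i, ∀ j l : Fin k, j ≠ l →
      rhoBoundary d k βstar r β s j l ≤ lam)
    (hA : Aset d k βstar r β i = ∅) :
    (∫ x in voronoi d k β i, ballMixDensity d k βstar r x) ≤ k * lam * r :=
  ball_family_bounds_part2a_general d k hd βstar r hr β lam hlam i hrho hA
end
end

section
/- (Controlling the volume of the intersection of a polyhedron and a ball.) Let μ be the uniform probability measure on the closed ball B(0, r) ⊂ ℝ^d and let λ > 0. Let P = ⋂_{j=1}^k {x ∈ ℝ^d : ⟨a_j, x⟩ ≤ b_j} be a closed polyhedron defined by k halfspaces (a_j ∈ ℝ^d \ {0}, b_j ∈ ℝ), and suppose 0 does not lie in the topological interior of P. If for every j ∈ [k] one has H^{d−1}(P ∩ {x : ⟨a_j, x⟩ = b_j} ∩ B(0, r)) ≤ λ · r^d · V_d, where H^{d−1} is (d−1)-dimensional Hausdorff measure and V_d is the Lebesgue volume of the unit ball of ℝ^d, then μ(P) ≤ kλr. -/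
open MeasureTheory Metric Set
open scoped RealInnerProductSpace

noncomputable section

/-!
Separate the origin from the interior of `P` by a unit vector `u`, so that `⟪u, ·⟫ > 0` on
`interior P`. Walking from a point `x ∈ P ∩ B(0, r)` along `-u` until `⟪u, ·⟫` vanishes, one leaves
the interior of `P` within time `⟪u, x⟫ ≤ r` and without leaving the ball, so `x` lies in the prism
`F_j + [0, r] • u` over one of the facets `F_j = P ∩ {⟪a_j, ·⟫ = b_j} ∩ B(0, r)`. By Fubini in
coordinates adapted to the hyperplane of `F_j`, such a prism has volume at most
`r · H^{d-1}(F_j) ≤ r · λ r^d V_d`, and summing over the `k` facets gives the bound.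
-/

section Prism

variable {E : Type*} [AddCommGroup E] [Module ℝ E]

def prism (F : Set E) (u : E) (r : ℝ) : Set E :=
  (fun p : E × ℝ => p.1 + p.2 • u) '' (F ×ˢ Icc 0 r)

lemma prism_mono {F G : Set E} (h : F ⊆ G) (u : E) (r : ℝ) : prism F u r ⊆ prism G u r :=
  image_mono (prod_mono h subset_rfl)

lemma prism_iUnion {ι : Type*} (F : ι → Set E) (u : E) (r : ℝ) :
    prism (⋃ i, F i) u r = ⋃ i, prism (F i) u r := by
  rw [prism, iUnion_prod_const, image_iUnion]; rfl

lemma image_prism {E' G : Type*} [AddCommGroup E'] [Module ℝ E'] [FunLike G E E']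
    [LinearMapClass G ℝ E E'] (f : G) (F : Set E) (u : E) (r : ℝ) :
    f '' prism F u r = prism (f '' F) (f u) r := by
  rw [prism, prism, image_image, ← image_id (Icc 0 r), prod_image_image_eq, image_image]
  simp

end Prism

theorem IsPreconnected.inter_frontier_nonempty {X : Type*} [TopologicalSpace X] {s t : Set X}
    (hs : IsPreconnected s) (hst : (s ∩ t).Nonempty) (hst' : (s \ t).Nonempty) :
    (s ∩ frontier t).Nonempty := by
  by_contra h
  have hcover : s ⊆ interior t ∪ (closure t)ᶜ := fun x hx => by
    by_cases hxi : x ∈ interior t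
    · exact Or.inl hxi
    · exact Or.inr fun hxc => h ⟨x, hx, hxc, hxi⟩
  obtain ⟨x, hxs, hxt⟩ := hst
  obtain ⟨y, hys, hyt⟩ := hst'
  obtain ⟨z, -, hzi, hzc⟩ := hs _ _ isOpen_interior isClosed_closure.isOpen_compl hcover
    ⟨x, hxs, (hcover hxs).resolve_right fun hxc => hxc (subset_closure hxt)⟩
    ⟨y, hys, (hcover hys).resolve_left fun hyi => hyt (interior_subset hyi)⟩
  exact hzc (subset_closure (interior_subset hzi))

lemma lipschitzWith_one_init_ofLp (m : ℕ) :
    LipschitzWith 1 (fun x : EuclideanSpace ℝ (Fin (m + 1)) => Fin.init x.ofLp) :=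
  LipschitzWith.of_dist_le_mul fun x y => by
    rw [NNReal.coe_one, one_mul]
    exact dist_pi_le_iff dist_nonneg |>.2 fun j => PiLp.dist_apply_le x y j.castSucc

lemma measurePreserving_last_init_ofLp (m : ℕ) :
    MeasurePreserving
      (fun x : EuclideanSpace ℝ (Fin (m + 1)) => (x (Fin.last m), Fin.init x.ofLp)) := by
  convert (volume_preserving_piFinSuccAbove (fun _ : Fin (m + 1) => ℝ) (Fin.last m)).comp
    (PiLp.volume_preserving_ofLp (Fin (m + 1))) using 1
  ext x <;> simp

/-- Fubini along the last coordinate: each horizontal slice of the prism is a translate of the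
projection of `F` to the first `m` coordinates, and that projection is `1`-Lipschitz. -/
lemma volume_prism_le_of_forall_last_eq {m : ℕ} {F : Set (EuclideanSpace ℝ (Fin (m + 1)))}
    (hF : IsCompact F) {c : ℝ} (hFc : ∀ x ∈ F, x (Fin.last m) = c)
    {v : EuclideanSpace ℝ (Fin (m + 1))} (hv : 0 < v (Fin.last m)) (r : ℝ) :
    volume (prism F v r) ≤ ENNReal.ofReal (r * v (Fin.last m)) * μH[m] F := by
  set α := v (Fin.last m)
  set π := fun x : EuclideanSpace ℝ (Fin (m + 1)) => Fin.init x.ofLp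
  set A := π '' F
  have hA : IsCompact A := hF.image (lipschitzWith_one_init_ofLp m).continuous
  set S := {p : ℝ × (Fin m → ℝ) | p.1 ∈ Icc c (c + r * α) ∧ p.2 - ((p.1 - c) / α) • π v ∈ A}
  have hS : MeasurableSet S :=
    (measurableSet_Icc.preimage measurable_fst).inter (hA.measurableSet.preimage (by fun_prop))
  have hprism : prism F v r ⊆
      (fun x : EuclideanSpace ℝ (Fin (m + 1)) => (x (Fin.last m), π x)) ⁻¹' S := by
    rintro _ ⟨⟨z, s⟩, ⟨hz : z ∈ F, hs : s ∈ Icc 0 r⟩, rfl⟩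
    have hlast : (z + s • v) (Fin.last m) = c + s * α := by simp [hFc z hz, α]
    have hs' : (c + s * α - c) / α = s := by field_simp; ring
    show (z + s • v) (Fin.last m) ∈ Icc c (c + r * α) ∧
      π (z + s • v) - (((z + s • v) (Fin.last m) - c) / α) • π v ∈ A
    rw [hlast, hs']
    refine ⟨⟨?_, ?_⟩, ?_⟩
    · nlinarith [hs.1]
    · nlinarith [hs.2]
    · convert mem_image_of_mem π hz using 1
      ext j
      simp [π, Fin.init]
  have hslice : ∀ t, volume (Prod.mk t ⁻¹' S) ≤
      (Icc c (c + r * α)).indicator (fun _ => volume A) t := by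
    intro t
    by_cases ht : t ∈ Icc c (c + r * α)
    · rw [indicator_of_mem ht]
      calc volume (Prod.mk t ⁻¹' S) ≤ volume ((fun ξ => ξ + -(((t - c) / α) • π v)) ⁻¹' A) :=
            measure_mono fun ξ hξ => by simpa [sub_eq_add_neg] using hξ.2
        _ = volume A := measure_preimage_add_right _ _ _
    · have : Prod.mk t ⁻¹' S = ∅ := eq_empty_of_forall_notMem fun ξ hξ => ht hξ.1
      simp [this]
  have hAF : volume A ≤ μH[m] F := by
    have := (lipschitzWith_one_init_ofLp m).hausdorffMeasure_image_le (Nat.cast_nonneg m) F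
    rw [← hausdorffMeasure_pi_real, Fintype.card_fin]
    simpa using this
  calc volume (prism F v r)
      ≤ volume ((fun x : EuclideanSpace ℝ (Fin (m + 1)) => (x (Fin.last m), π x)) ⁻¹' S) :=
        measure_mono hprism
    _ = volume S :=
        (measurePreserving_last_init_ofLp m).measure_preimage hS.nullMeasurableSet
    _ = ∫⁻ t, volume (Prod.mk t ⁻¹' S) := Measure.prod_apply hS
    _ ≤ ∫⁻ t, (Icc c (c + r * α)).indicator (fun _ => volume A) t := lintegral_mono hslice
    _ = ENNReal.ofReal (r * α) * volume A := by
        rw [lintegral_indicator_const measurableSet_Icc, Real.volume_Icc, add_sub_cancel_left,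
          mul_comm]
    _ ≤ ENNReal.ofReal (r * α) * μH[m] F := by gcongr

section InnerProductSpace

variable {E ι : Type*} [NormedAddCommGroup E] [InnerProductSpace ℝ E]

lemma exists_norm_eq_one_inner_pos_of_zero_notMem_interior [CompleteSpace E] [Nontrivial E]
    {P : Set E} (hP : Convex ℝ P) (h0 : 0 ∉ interior P) :
    ∃ u : E, ‖u‖ = 1 ∧ ∀ z ∈ interior P, 0 < ⟪u, z⟫ := by
  obtain ⟨f, hf⟩ := geometric_hahn_banach_open_point hP.interior isOpen_interior h0
  set v := (InnerProductSpace.toDual ℝ E).symm f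
  have hv : ∀ z, ⟪v, z⟫ = f z := fun z => InnerProductSpace.toDual_symm_apply
  by_cases hv0 : v = 0
  · obtain ⟨u, hu⟩ := exists_norm_eq E zero_le_one
    refine ⟨u, hu, fun z hz => absurd (hf z hz) ?_⟩
    simp [← hv, hv0]
  refine ⟨-(‖v‖⁻¹ • v), by rw [norm_neg]; exact norm_smul_inv_norm hv0, fun z hz => ?_⟩
  have hfz : f z < 0 := map_zero f ▸ hf z hz
  rw [inner_neg_left, real_inner_smul_left, hv]
  exact neg_pos.2 (mul_neg_of_pos_of_neg (inv_pos.2 (norm_pos_iff.2 hv0)) hfz)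

def polyhedron (a : ι → E) (b : ι → ℝ) : Set E :=
  ⋂ j, {x | ⟪a j, x⟫ ≤ b j}

lemma isClosed_polyhedron (a : ι → E) (b : ι → ℝ) : IsClosed (polyhedron a b) :=
  isClosed_iInter fun _ => isClosed_le (continuous_const.inner continuous_id) continuous_const

lemma convex_polyhedron (a : ι → E) (b : ι → ℝ) : Convex ℝ (polyhedron a b) :=
  convex_iInter fun j => convex_halfSpace_le (innerₛₗ ℝ (a j)).isLinear (b j)

lemma frontier_polyhedron_subset [Finite ι] (a : ι → E) (b : ι → ℝ) :
    frontier (polyhedron a b) ⊆ ⋃ j, polyhedron a b ∩ {x | ⟪a j, x⟫ = b j} := by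
  intro x hx
  have hxP : x ∈ polyhedron a b := (isClosed_polyhedron a b).frontier_subset hx
  have hU : IsOpen (⋂ j, {x : E | ⟪a j, x⟫ < b j}) :=
    isOpen_iInter_of_finite fun j => isOpen_lt (continuous_const.inner continuous_id)
      continuous_const
  have hUP : (⋂ j, {x : E | ⟪a j, x⟫ < b j}) ⊆ polyhedron a b :=
    iInter_mono fun j => ofPred_subset_ofPred.2 fun _ => le_of_lt
  by_contra hxH
  refine hx.2 (interior_maximal hUP hU (mem_iInter.2 fun j => ?_))
  exact lt_of_le_of_ne (mem_iInter.1 hxP j) fun h => hxH (mem_iUnion.2 ⟨j, hxP, h⟩)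

/-- From an interior point `x`, walk along `-u` until `⟪u, ·⟫` vanishes: the walk leaves
`interior P` and does not increase the norm. -/
lemma inter_closedBall_subset_prism_frontier {P : Set E} {u : E} (hu : ‖u‖ = 1)
    (hPu : ∀ z ∈ interior P, 0 < ⟪u, z⟫) (r : ℝ) :
    P ∩ closedBall 0 r ⊆ prism (frontier P ∩ closedBall 0 r) u r := by
  rintro x ⟨hxP, hxr⟩
  rw [mem_closedBall_zero_iff] at hxr
  by_cases hx : x ∈ interior P
  swap
  · exact ⟨(x, 0), ⟨⟨⟨subset_closure hxP, hx⟩, mem_closedBall_zero_iff.2 hxr⟩, le_rfl,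
      (norm_nonneg x).trans hxr⟩, by simp⟩
  set T := ⟪u, x⟫
  have hT : 0 < T := hPu x hx
  have hTr : T ≤ r := (real_inner_le_norm u x).trans (by rw [hu, one_mul]; exact hxr)
  have hconn : IsPreconnected ((fun t : ℝ => x - t • u) '' Icc 0 T) :=
    isPreconnected_Icc.image _ (by fun_prop)
  have hend : x - T • u ∉ interior P := fun h => (hPu _ h).ne' <| by
    rw [inner_sub_right, real_inner_smul_right, real_inner_self_eq_norm_sq, hu]; ring
  obtain ⟨_, ⟨t, ht, rfl⟩, hy⟩ := hconn.inter_frontier_nonempty (t := interior P)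
    ⟨x, ⟨0, ⟨le_rfl, hT.le⟩, by simp⟩, hx⟩ ⟨x - T • u, ⟨T, ⟨hT.le, le_rfl⟩, rfl⟩, hend⟩
  have hnorm : ‖x - t • u‖ ≤ ‖x‖ := by
    refine (pow_le_pow_iff_left₀ (norm_nonneg _) (norm_nonneg _) two_ne_zero).1 ?_
    rw [norm_sub_sq_real, real_inner_smul_right, norm_smul, hu, real_inner_comm,
      Real.norm_eq_abs, mul_one, sq_abs]
    nlinarith [ht.1, ht.2]
  exact ⟨(x - t • u, t), ⟨⟨frontier_interior_subset hy,
    mem_closedBall_zero_iff.2 (hnorm.trans hxr)⟩, ht.1, ht.2.trans hTr⟩, by simp⟩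

variable [FiniteDimensional ℝ E] [MeasurableSpace E] [BorelSpace E]

lemma volume_setOf_inner_eq_eq_zero {a : E} (ha : a ≠ 0) (b : ℝ) :
    volume {x : E | ⟪a, x⟫ = b} = 0 := by
  let H : AffineSubspace ℝ E :=
    (AffineSubspace.mk' b ⊥).comap (innerSL ℝ a).toLinearMap.toAffineMap
  have hH : (H : Set E) = {x | ⟪a, x⟫ = b} := by ext; simp [H, sub_eq_zero]
  rw [← hH]
  refine Measure.addHaar_affineSubspace _ _ fun htop => ha ?_
  have hmem : ∀ x : E, ⟪a, x⟫ = b := fun x => by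
    have hx : x ∈ H := htop ▸ AffineSubspace.mem_top ℝ E x
    rwa [← SetLike.mem_coe, hH] at hx
  exact inner_self_eq_zero.1 ((hmem a).trans ((hmem 0).symm.trans (inner_zero_right a)))

/-- Rotate so that the unit normal `‖a‖⁻¹ • a` becomes the last basis vector. -/
lemma volume_prism_le_of_inner_pos {m : ℕ} (hE : Module.finrank ℝ E = m + 1) {F : Set E}
    (hF : IsCompact F) {a : E} {b : ℝ} (hFa : ∀ x ∈ F, ⟪a, x⟫ = b) {u : E} (hu : ‖u‖ = 1)
    (hau : 0 < ⟪a, u⟫) {r : ℝ} (hr : 0 ≤ r) :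
    volume (prism F u r) ≤ ENNReal.ofReal r * μH[m] F := by
  have ha : a ≠ 0 := by rintro rfl; simp at hau
  set n := ‖a‖⁻¹ • a
  have hn : ‖n‖ = 1 := norm_smul_inv_norm ha
  have horth : Orthonormal ℝ (({Fin.last m} : Set (Fin (m + 1))).domRestrict fun _ => n) := by
    rw [orthonormal_iff_ite]
    rintro ⟨i, rfl⟩ ⟨j, rfl⟩
    simp [Set.domRestrict, hn]
  obtain ⟨B, hB⟩ := horth.exists_orthonormalBasis_extension_of_card_eq (by simpa using hE)
  set R := B.repr
  have hR : ∀ x, R x (Fin.last m) = ⟪n, x⟫ := fun x => by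
    rw [B.repr_apply_apply, hB _ rfl]
  have hnu : 0 < ⟪n, u⟫ := by
    rw [real_inner_smul_left]; exact mul_pos (inv_pos.2 (norm_pos_iff.2 ha)) hau
  have hnu1 : ⟪n, u⟫ ≤ 1 := (real_inner_le_norm n u).trans (by rw [hn, hu, one_mul])
  calc volume (prism F u r) = volume (R '' prism F u r) := by
        rw [R.image_eq_preimage_symm]
        exact (R.symm.measurePreserving.measure_preimage_emb
          R.symm.toHomeomorph.measurableEmbedding _).symm
    _ = volume (prism (R '' F) (R u) r) := by rw [image_prism]
    _ ≤ ENNReal.ofReal (r * R u (Fin.last m)) * μH[m] (R '' F) := by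
        refine volume_prism_le_of_forall_last_eq (hF.image R.continuous) (c := ‖a‖⁻¹ * b) ?_
          (by rwa [hR]) r
        rintro _ ⟨z, hz, rfl⟩
        rw [hR, real_inner_smul_left, hFa z hz]
    _ ≤ ENNReal.ofReal r * μH[m] F := by
        rw [R.isometry.hausdorffMeasure_image (Or.inl (Nat.cast_nonneg m)), hR]
        gcongr
        exact mul_le_of_le_one_right hr hnu1

lemma volume_prism_le {m : ℕ} (hE : Module.finrank ℝ E = m + 1) {F : Set E} (hF : IsCompact F)
    {a : E} (ha : a ≠ 0) {b : ℝ} (hFa : ∀ x ∈ F, ⟪a, x⟫ = b) {u : E} (hu : ‖u‖ = 1) {r : ℝ}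
    (hr : 0 ≤ r) : volume (prism F u r) ≤ ENNReal.ofReal r * μH[m] F := by
  rcases lt_trichotomy ⟪a, u⟫ 0 with hau | hau | hau
  · refine volume_prism_le_of_inner_pos hE hF (a := -a) (b := -b) (fun x hx => ?_) hu ?_ hr
    · rw [inner_neg_left, hFa x hx]
    · rwa [inner_neg_left, neg_pos]
  · refine (measure_mono_null ?_ (volume_setOf_inner_eq_eq_zero ha b)).trans_le zero_le
    rintro _ ⟨⟨z, s⟩, ⟨hz : z ∈ F, -⟩, rfl⟩
    simp [inner_add_right, real_inner_smul_right, hau, hFa z hz]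
  · exact volume_prism_le_of_inner_pos hE hF hFa hu hau hr

lemma volume_polyhedron_inter_closedBall_le {m : ℕ} (hE : Module.finrank ℝ E = m + 1)
    [Fintype ι] {a : ι → E} (ha : ∀ j, a j ≠ 0) {b : ι → ℝ}
    (h0 : 0 ∉ interior (polyhedron a b)) {r : ℝ} (hr : 0 ≤ r) :
    volume (polyhedron a b ∩ closedBall 0 r) ≤ ENNReal.ofReal r *
      ∑ j, μH[m] (polyhedron a b ∩ {x | ⟪a j, x⟫ = b j} ∩ closedBall 0 r) := by
  have : Nontrivial E := Module.nontrivial_of_finrank_eq_succ hE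
  obtain ⟨u, hu, hPu⟩ :=
    exists_norm_eq_one_inner_pos_of_zero_notMem_interior (convex_polyhedron a b) h0
  have hcover : polyhedron a b ∩ closedBall 0 r ⊆
      ⋃ j, prism (polyhedron a b ∩ {x | ⟪a j, x⟫ = b j} ∩ closedBall 0 r) u r := by
    refine (inter_closedBall_subset_prism_frontier hu hPu r).trans ?_
    rw [← prism_iUnion, ← iUnion_inter]
    exact prism_mono (inter_subset_inter_left _ (frontier_polyhedron_subset a b)) u r
  rw [Finset.mul_sum]
  refine (measure_mono hcover).trans <| (measure_iUnion_fintype_le _ _).trans <|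
    Finset.sum_le_sum fun j _ => volume_prism_le hE ?_ (ha j) (fun x hx => hx.1.2) hu hr
  exact (isCompact_closedBall _ _).inter_left <|
    (isClosed_polyhedron a b).inter (isClosed_eq (by fun_prop) continuous_const)

end InnerProductSpace

/-- Controlling the volume of the intersection of a polyhedron and a ball: if a closed
polyhedron `P = ⋂_j {⟨a_j, x⟩ ≤ b_j}` with `k` facets does not contain the origin in its
interior, and every facet intersects the ball `B(0,r)` with `(d−1)`-dimensional Hausdorff
measure at most `λ·r^d·V_d`, then `P` has uniform probability measure at most `kλr` on
`B(0,r)`. -/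
theorem volume_polyhedron_ball_bound (d k : ℕ) (hd : 1 ≤ d)
    (r lam : ℝ) (hr : 0 < r) (hlam : 0 < lam)
    (a : Fin k → EuclideanSpace ℝ (Fin d)) (ha : ∀ j : Fin k, a j ≠ 0)
    (b : Fin k → ℝ)
    (P : Set (EuclideanSpace ℝ (Fin d)))
    (hP : P = ⋂ j : Fin k, {x : EuclideanSpace ℝ (Fin d) | ⟪a j, x⟫ ≤ b j})
    (h0 : (0 : EuclideanSpace ℝ (Fin d)) ∉ interior P)
    (hfacet : ∀ j : Fin k,
      MeasureTheory.Measure.hausdorffMeasure ((d : ℝ) - 1)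
          (P ∩ {x : EuclideanSpace ℝ (Fin d) | ⟪a j, x⟫ = b j} ∩
            Metric.closedBall (0 : EuclideanSpace ℝ (Fin d)) r) ≤
        ENNReal.ofReal (lam * r ^ d *
          (volume (Metric.ball (0 : EuclideanSpace ℝ (Fin d)) 1)).toReal)) :
    (volume (P ∩ Metric.closedBall (0 : EuclideanSpace ℝ (Fin d)) r)).toReal /
        (volume (Metric.closedBall (0 : EuclideanSpace ℝ (Fin d)) r)).toReal ≤
      k * lam * r := by
  obtain ⟨m, rfl⟩ : ∃ m, d = m + 1 := ⟨d - 1, by omega⟩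
  obtain rfl : P = polyhedron a b := hP
  set V := volume (ball (0 : EuclideanSpace ℝ (Fin (m + 1))) 1)
  have hVpos : 0 < V.toReal :=
    ENNReal.toReal_pos (measure_ball_pos _ _ one_pos).ne' measure_ball_lt_top.ne
  have hball : (volume (closedBall (0 : EuclideanSpace ℝ (Fin (m + 1))) r)).toReal =
      r ^ (m + 1) * V.toReal := by
    rw [Measure.addHaar_closedBall _ _ hr.le, finrank_euclideanSpace_fin, ENNReal.toReal_mul,
      ENNReal.toReal_ofReal (by positivity)]
  have hvol := (volume_polyhedron_inter_closedBall_le (m := m) (by simp) ha h0 hr.le).trans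
    (mul_le_mul_right (Finset.sum_le_sum fun j _ => by simpa using hfacet j) _)
  rw [hball, div_le_iff₀ (by positivity)]
  refine (ENNReal.toReal_mono (by simp [ENNReal.mul_eq_top]) hvol).trans_eq ?_
  simp only [Finset.sum_const, Finset.card_univ, Fintype.card_fin, nsmul_eq_mul,
    ENNReal.toReal_mul, ENNReal.toReal_natCast, ENNReal.toReal_ofReal hr.le,
    ENNReal.toReal_ofReal (by positivity : 0 ≤ lam * r ^ (m + 1) * V.toReal)]
  ring
end
end
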